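/- arXiv:1611.00745 — 3 statements merged into one kernel-verified Lean document; each statement's English description precedes it below -/
import Mathlib

section
/- Let n ≥ 1, 0 ≤ n₁, n₂ ≤ n with (n₁, n₂) ≠ (n, n), and let S_{n₁n₂} ⊆ ℝ^{n×n} be the span of {e^(i) : i ≤ n₁} ∪ {ẽ^(j) : j ≤ n₂}. Let χ^(ij) be the matrix with 1 in entry (i,j) and 0 elsewhere. Then the squared norm of the orthogonal projection of χ^(ij) onto S_{n₁n₂} equals ζ_{ij}/n, where ζ_{ij} = 2 − (2n − n₁ − n₂)/(n² − n₁n₂) if i ≤ n₁ and j ≤ n₂; ζ_{ij} = 1 + n₂/(n² − n₁n₂) if i ≤ n₁ and j > n₂; ζ_{ij} = 1 + n₁/(n² − n₁n₂) if i > n₁ and j ≤ n₂; and ζ_{ij} = 0 if i > n₁ and j > n₂. -/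
/-!
The projection `p` of `χ^(ij)` onto `S_{n₁n₂}` has entries `p (a, b) = r a + c b`, with `r` supported
on the first `n₁` rows and `c` on the first `n₂` columns. Orthogonality of `χ^(ij) - p` to the
generators reads `n r_k + Σ c = δ_ik` for `k < n₁` and `Σ r + n c_l = δ_jl` for `l < n₂`; summing
these gives a `2 × 2` system for the totals `A = Σ r`, `B = Σ c` with determinant `n² - n₁n₂`.
Finally `‖p‖² = ⟪p, χ^(ij)⟫ = p (i, j)`.
-/

open Finset

noncomputable section

/-- Row indicator matrix as an element of Euclidean space `ℝ^{n×n}`. -/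
def rowInd (n : ℕ) (i : Fin n) : EuclideanSpace ℝ (Fin n × Fin n) :=
  WithLp.toLp 2 (fun p => if p.1 = i then 1 else 0)

/-- Column indicator matrix as an element of Euclidean space `ℝ^{n×n}`. -/
def colInd (n : ℕ) (j : Fin n) : EuclideanSpace ℝ (Fin n × Fin n) :=
  WithLp.toLp 2 (fun p => if p.2 = j then 1 else 0)

/-- The subspace `S_{n₁ n₂}` spanned by the first `n₁` row indicators and the
first `n₂` column indicators. -/
def spanS (n n₁ n₂ : ℕ) : Submodule ℝ (EuclideanSpace ℝ (Fin n × Fin n)) :=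
  Submodule.span ℝ
    ({x | ∃ i : Fin n, (i : ℕ) < n₁ ∧ x = rowInd n i} ∪
     {x | ∃ j : Fin n, (j : ℕ) < n₂ ∧ x = colInd n j})

section

variable {𝕜 E : Type*} [RCLike 𝕜] [NormedAddCommGroup E] [InnerProductSpace 𝕜 E]

theorem Submodule.starProjection_span_eq_of_inner_eq_zero {s : Set E}
    [(Submodule.span 𝕜 s).HasOrthogonalProjection] {x p : E} (hp : p ∈ Submodule.span 𝕜 s)
    (h : ∀ v ∈ s, inner 𝕜 v (x - p) = 0) : (Submodule.span 𝕜 s).starProjection x = p := by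
  refine Submodule.eq_starProjection_of_mem_orthogonal hp ?_
  have : Submodule.span 𝕜 s ⟂ 𝕜 ∙ (x - p) := Submodule.isOrtho_span.mpr (by simpa using h)
  exact this.symm (Submodule.mem_span_singleton_self _)

end

theorem EuclideanSpace.norm_orthogonalProjectionOnto_single_sq {ι : Type*} [Fintype ι]
    [DecidableEq ι] (K : Submodule ℝ (EuclideanSpace ℝ ι)) [K.HasOrthogonalProjection] (q : ι) :
    ‖(K.orthogonalProjectionOnto (EuclideanSpace.single q 1) : EuclideanSpace ℝ ι)‖ ^ 2 =
      K.starProjection (EuclideanSpace.single q 1) q := by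
  rw [← Submodule.coe_norm, ← K.re_inner_starProjection_eq_normSq,
    EuclideanSpace.inner_single_right]
  simp

section

variable {n : ℕ}

theorem inner_rowInd_left (k : Fin n) (x : EuclideanSpace ℝ (Fin n × Fin n)) :
    inner ℝ (rowInd n k) x = ∑ b, x (k, b) := by
  simp [PiLp.inner_apply, rowInd, Fintype.sum_prod_type_right]

theorem inner_colInd_left (l : Fin n) (x : EuclideanSpace ℝ (Fin n × Fin n)) :
    inner ℝ (colInd n l) x = ∑ a, x (a, l) := by
  simp [PiLp.inner_apply, colInd, Fintype.sum_prod_type]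

def rowColMatrix (r c : Fin n → ℝ) : EuclideanSpace ℝ (Fin n × Fin n) :=
  WithLp.toLp 2 fun q => r q.1 + c q.2

@[simp]
theorem rowColMatrix_apply (r c : Fin n → ℝ) (q : Fin n × Fin n) :
    rowColMatrix r c q = r q.1 + c q.2 := rfl

theorem rowColMatrix_eq_sum (r c : Fin n → ℝ) :
    rowColMatrix r c = ∑ k, r k • rowInd n k + ∑ l, c l • colInd n l := by
  ext q
  simp [rowInd, colInd, Finset.sum_apply]

theorem rowColMatrix_mem_spanS {n₁ n₂ : ℕ} {r c : Fin n → ℝ}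
    (hr : ∀ a : Fin n, n₁ ≤ a → r a = 0) (hc : ∀ b : Fin n, n₂ ≤ b → c b = 0) :
    rowColMatrix r c ∈ spanS n n₁ n₂ := by
  rw [rowColMatrix_eq_sum]
  refine Submodule.add_mem _ (Submodule.sum_mem _ fun k _ => ?_)
    (Submodule.sum_mem _ fun l _ => ?_)
  · by_cases hk : (k : ℕ) < n₁
    · exact Submodule.smul_mem _ _ (Submodule.subset_span (Or.inl ⟨k, hk, rfl⟩))
    · simp [hr k (not_lt.mp hk)]
  · by_cases hl : (l : ℕ) < n₂
    · exact Submodule.smul_mem _ _ (Submodule.subset_span (Or.inr ⟨l, hl, rfl⟩))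
    · simp [hc l (not_lt.mp hl)]

theorem inner_rowInd_rowColMatrix (k : Fin n) (r c : Fin n → ℝ) :
    inner ℝ (rowInd n k) (rowColMatrix r c) = n * r k + ∑ b, c b := by
  simp [inner_rowInd_left, Finset.sum_add_distrib]

theorem inner_colInd_rowColMatrix (l : Fin n) (r c : Fin n → ℝ) :
    inner ℝ (colInd n l) (rowColMatrix r c) = ∑ a, r a + n * c l := by
  simp [inner_colInd_left, Finset.sum_add_distrib]

theorem sum_ite_val_lt {m : ℕ} (hm : m ≤ n) (j : Fin n) (A : ℝ) :
    ∑ b : Fin n, (if (b : ℕ) < m then ((if b = j then 1 else 0) - A) / n else 0) =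
      ((if (j : ℕ) < m then 1 else 0) - m * A) / n := by
  rw [← Finset.sum_filter, ← Finset.sum_div, Finset.sum_sub_distrib, Finset.sum_ite_eq',
    Finset.sum_const, Fin.card_filter_val_lt, min_eq_right hm]
  simp

theorem starProjection_spanS_single {n₁ n₂ : ℕ} (h1 : n₁ ≤ n) (h2 : n₂ ≤ n) (i j : Fin n)
    {A B : ℝ} (hA : ((if (i : ℕ) < n₁ then 1 else 0) - n₁ * B) / n = A)
    (hB : ((if (j : ℕ) < n₂ then 1 else 0) - n₂ * A) / n = B) :
    (spanS n n₁ n₂).starProjection (EuclideanSpace.single (i, j) 1) =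
      rowColMatrix (fun a => if (a : ℕ) < n₁ then ((if a = i then 1 else 0) - B) / n else 0)
        (fun b => if (b : ℕ) < n₂ then ((if b = j then 1 else 0) - A) / n else 0) := by
  have hn : (n : ℝ) ≠ 0 := Nat.cast_ne_zero.mpr i.pos.ne'
  refine Submodule.starProjection_span_eq_of_inner_eq_zero
    (rowColMatrix_mem_spanS (fun a ha => if_neg ha.not_gt) (fun b hb => if_neg hb.not_gt)) ?_
  rintro _ (⟨k, hk, rfl⟩ | ⟨l, hl, rfl⟩) <;> rw [inner_sub_right, sub_eq_zero]
  · rw [inner_rowInd_rowColMatrix, sum_ite_val_lt h2, hB, inner_rowInd_left]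
    by_cases hik : i = k <;> simp [hk, hik, mul_div_cancel₀ _ hn, eq_comm]
  · rw [inner_colInd_rowColMatrix, sum_ite_val_lt h1, hA, inner_colInd_left]
    by_cases hjl : j = l <;> simp [hl, hjl, mul_div_cancel₀ _ hn, eq_comm]

end

theorem stmt5_general (n n₁ n₂ : ℕ) (h1 : n₁ ≤ n) (h2 : n₂ ≤ n)
    (hne : ¬(n₁ = n ∧ n₂ = n)) (i j : Fin n) :
    ‖((spanS n n₁ n₂).orthogonalProjection (EuclideanSpace.single (i, j) (1 : ℝ))
        : EuclideanSpace ℝ (Fin n × Fin n))‖ ^ 2 =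
      (if (i : ℕ) < n₁ ∧ (j : ℕ) < n₂ then
          2 - (2 * n - n₁ - n₂ : ℝ) / ((n : ℝ) ^ 2 - (n₁ : ℝ) * n₂)
        else if (i : ℕ) < n₁ then 1 + (n₂ : ℝ) / ((n : ℝ) ^ 2 - (n₁ : ℝ) * n₂)
        else if (j : ℕ) < n₂ then 1 + (n₁ : ℝ) / ((n : ℝ) ^ 2 - (n₁ : ℝ) * n₂)
        else 0) / n := by
  have hn : (n : ℝ) ≠ 0 := Nat.cast_ne_zero.mpr i.pos.ne'
  set D : ℝ := n ^ 2 - n₁ * n₂ with hD_def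
  have hD : D ≠ 0 := by
    have : n₁ * n₂ < n ^ 2 := by
      rcases not_and_or.mp hne with h | h
      · nlinarith [lt_of_le_of_ne h1 h]
      · nlinarith [lt_of_le_of_ne h2 h]
    exact sub_ne_zero.mpr (by exact_mod_cast this.ne')
  set u : ℝ := if (i : ℕ) < n₁ then 1 else 0 with hu
  set v : ℝ := if (j : ℕ) < n₂ then 1 else 0 with hv
  have hA : (u - n₁ * ((n * v - n₂ * u) / D)) / n = (n * u - n₁ * v) / D := by
    field_simp; rw [hD_def]; ring
  have hB : (v - n₂ * ((n * u - n₁ * v) / D)) / n = (n * v - n₂ * u) / D := by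
    field_simp; rw [hD_def]; ring
  rw [EuclideanSpace.norm_orthogonalProjectionOnto_single_sq,
    starProjection_spanS_single h1 h2 i j hA hB, rowColMatrix_apply]
  by_cases hi : (i : ℕ) < n₁ <;> by_cases hj : (j : ℕ) < n₂ <;>
    simp [hu, hv, hi, hj] <;> field_simp <;> ring

theorem stmt5 (n n₁ n₂ : ℕ) (hn : 1 ≤ n) (h1 : n₁ ≤ n) (h2 : n₂ ≤ n)
    (hne : ¬(n₁ = n ∧ n₂ = n)) (i j : Fin n) :
    ‖((spanS n n₁ n₂).orthogonalProjection (EuclideanSpace.single (i, j) (1 : ℝ))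
        : EuclideanSpace ℝ (Fin n × Fin n))‖ ^ 2 =
      (if (i : ℕ) < n₁ ∧ (j : ℕ) < n₂ then
          2 - (2 * n - n₁ - n₂ : ℝ) / ((n : ℝ) ^ 2 - (n₁ : ℝ) * n₂)
        else if (i : ℕ) < n₁ then 1 + (n₂ : ℝ) / ((n : ℝ) ^ 2 - (n₁ : ℝ) * n₂)
        else if (j : ℕ) < n₂ then 1 + (n₁ : ℝ) / ((n : ℝ) ^ 2 - (n₁ : ℝ) * n₂)
        else 0) / n :=
  stmt5_general n n₁ n₂ h1 h2 hne i j
end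
end

section
/- Let n ≥ 1 and let S_{nn} ⊆ ℝ^{n×n} be the span of all row-indicator matrices e^(i) and all column-indicator matrices ẽ^(j). For every 1 ≤ i, j ≤ n, the squared Frobenius norm of the orthogonal projection of the elementary matrix χ^(ij) onto S_{nn} equals (2n − 1)/n². -/
/-!
The projection of `χ^(ij)` onto `S_{nn}` is `w = (e^(i) + ẽ^(j)) / n - 𝟙 / n²`: `w` lies in
`S_{nn}`, and `χ^(ij) - w` has all row and column sums zero, which is exactly orthogonality to
the row and column indicators. As the projection `P` is a self-adjoint idempotent,
`‖P χ^(ij)‖² = ⟪P χ^(ij), χ^(ij)⟫ = w_ij = 2/n - 1/n²`.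
-/

open Finset

noncomputable section

/-- The subspace `S_{nn}` spanned by all row and all column indicators. -/
def spanSnn (n : ℕ) : Submodule ℝ (EuclideanSpace ℝ (Fin n × Fin n)) :=
  Submodule.span ℝ
    ({x | ∃ i : Fin n, x = rowInd n i} ∪ {x | ∃ j : Fin n, x = colInd n j})

open scoped RealInnerProductSpace

section

variable {n : ℕ}

lemma inner_rowInd (x : EuclideanSpace ℝ (Fin n × Fin n)) (k : Fin n) :
    ⟪x, rowInd n k⟫ = ∑ b, x (k, b) := by
  rw [PiLp.inner_apply, Fintype.sum_prod_type]
  simp [rowInd]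

lemma inner_colInd (x : EuclideanSpace ℝ (Fin n × Fin n)) (k : Fin n) :
    ⟪x, colInd n k⟫ = ∑ a, x (a, k) := by
  simp [colInd, PiLp.inner_apply, Fintype.sum_prod_type]

lemma mem_orthogonal_spanSnn_iff (x : EuclideanSpace ℝ (Fin n × Fin n)) :
    x ∈ (spanSnn n)ᗮ ↔ (∀ k, ∑ b, x (k, b) = 0) ∧ ∀ k, ∑ a, x (a, k) = 0 := by
  rw [Submodule.mem_orthogonal']
  change spanSnn n ≤ LinearMap.ker (innerₛₗ ℝ x) ↔ _
  simp [spanSnn, Submodule.span_le, Set.subset_def, inner_rowInd, inner_colInd]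

def projSingle (i j : Fin n) : EuclideanSpace ℝ (Fin n × Fin n) :=
  (n : ℝ)⁻¹ • (rowInd n i + colInd n j) - ((n : ℝ) ^ 2)⁻¹ • ∑ k, rowInd n k

lemma projSingle_apply (i j : Fin n) (p : Fin n × Fin n) :
    projSingle i j p =
      ((if p.1 = i then 1 else 0) + (if p.2 = j then 1 else 0)) / n - 1 / n ^ 2 := by
  simp only [projSingle, rowInd, colInd, smul_add, PiLp.sub_apply, PiLp.add_apply,
    PiLp.smul_apply, smul_eq_mul, mul_ite, mul_one, mul_zero, WithLp.ofLp_sum, Finset.sum_apply,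
    sum_ite_eq, mem_univ, ↓reduceIte, one_div, sub_left_inj]
  split_ifs <;> ring

lemma projSingle_mem_spanSnn (i j : Fin n) : projSingle i j ∈ spanSnn n := by
  have hrow : ∀ k, rowInd n k ∈ spanSnn n := fun k => Submodule.subset_span (Or.inl ⟨k, rfl⟩)
  have hcol : ∀ k, colInd n k ∈ spanSnn n := fun k => Submodule.subset_span (Or.inr ⟨k, rfl⟩)
  exact Submodule.sub_mem _ (Submodule.smul_mem _ _ (Submodule.add_mem _ (hrow i) (hcol j)))
    (Submodule.smul_mem _ _ (Submodule.sum_mem _ fun k _ => hrow k))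

lemma sum_single_row (i j k : Fin n) :
    ∑ b, EuclideanSpace.single (i, j) (1 : ℝ) (k, b) = if k = i then 1 else 0 := by
  simp [PiLp.single_apply, Prod.ext_iff, ite_and]

lemma sum_single_col (i j k : Fin n) :
    ∑ a, EuclideanSpace.single (i, j) (1 : ℝ) (a, k) = if k = j then 1 else 0 := by
  simp [PiLp.single_apply, Prod.ext_iff, ite_and]

lemma sum_projSingle_row (i j k : Fin n) :
    ∑ b, projSingle i j (k, b) = if k = i then 1 else 0 := by
  have hn : (n : ℝ) ≠ 0 := Nat.cast_ne_zero.2 i.pos.ne'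
  by_cases hk : k = i <;>
    simp only [projSingle_apply, hk, ↓reduceIte, zero_add, one_div, sum_sub_distrib,
      ← sum_div, sum_add_distrib, sum_const, card_univ, Fintype.card_fin, nsmul_eq_mul, mul_one,
      sum_ite_eq', mem_univ] <;>
    field_simp <;> ring

lemma sum_projSingle_col (i j k : Fin n) :
    ∑ a, projSingle i j (a, k) = if k = j then 1 else 0 := by
  have hn : (n : ℝ) ≠ 0 := Nat.cast_ne_zero.2 i.pos.ne'
  by_cases hk : k = j <;>
    simp only [projSingle_apply, hk, ↓reduceIte, add_zero, one_div, sum_sub_distrib,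
      ← sum_div, sum_add_distrib, sum_const, card_univ, Fintype.card_fin, nsmul_eq_mul, mul_one,
      sum_ite_eq', mem_univ] <;>
    field_simp <;> ring

lemma single_sub_projSingle_mem_orthogonal (i j : Fin n) :
    EuclideanSpace.single (i, j) (1 : ℝ) - projSingle i j ∈ (spanSnn n)ᗮ := by
  rw [mem_orthogonal_spanSnn_iff]
  refine ⟨fun k => ?_, fun k => ?_⟩ <;>
    simp only [PiLp.sub_apply, sum_sub_distrib, sum_single_row, sum_projSingle_row,
      sum_single_col, sum_projSingle_col, sub_self]

lemma starProjection_spanSnn_single (i j : Fin n) :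
    (spanSnn n).starProjection (EuclideanSpace.single (i, j) 1) = projSingle i j :=
  Submodule.eq_starProjection_of_mem_orthogonal (projSingle_mem_spanSnn i j)
    (single_sub_projSingle_mem_orthogonal i j)

end

theorem stmt6_general (n : ℕ) (i j : Fin n) :
    ‖((spanSnn n).orthogonalProjectionOnto (EuclideanSpace.single (i, j) (1 : ℝ))
        : EuclideanSpace ℝ (Fin n × Fin n))‖ ^ 2 = (2 * n - 1 : ℝ) / (n : ℝ) ^ 2 := by
  have hn : (n : ℝ) ≠ 0 := Nat.cast_ne_zero.2 i.pos.ne'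
  rw [Submodule.norm_coe, ← Submodule.re_inner_starProjection_eq_normSq, starProjection_spanSnn_single,
    EuclideanSpace.inner_single_right, projSingle_apply]
  simp only [↓reduceIte, conj_trivial, one_mul, RCLike.re_to_real]
  field_simp
  ring

theorem stmt6 (n : ℕ) (hn : 1 ≤ n) (i j : Fin n) :
    ‖((spanSnn n).orthogonalProjectionOnto (EuclideanSpace.single (i, j) (1 : ℝ))
        : EuclideanSpace ℝ (Fin n × Fin n))‖ ^ 2 = (2 * n - 1 : ℝ) / (n : ℝ) ^ 2 :=
  stmt6_general n i j

end
end

section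
/- Let n ≥ 1 and q ∈ ℝ^{n×n}, and let q_{∥S} denote the orthogonal projection of q onto the subspace S_{nn} spanned by all row- and column-indicator matrices. Then ‖q_{∥S}‖² = (1/n)·( Σ_i (Σ_j q_{ij})² + Σ_j (Σ_i q_{ij})² − (1/n)(Σ_{ij} q_{ij})² ). -/
/-!
Write `r i`, `c j` and `s` for the row, column and total sums of `q`. The projection of `q` onto
`S_nn` is the additive fit `p (i, j) = r i / n + c j / n - s / n ^ 2`: it is a combination of
row and column indicators, and it has the same row and column sums as `q`, so `q - p` is
orthogonal to every indicator. Then `‖p‖ ^ 2 = ⟪p, q⟫ = (∑ r i ^ 2 + ∑ c j ^ 2 - s ^ 2 / n) / n`.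
-/

open Finset

noncomputable section

theorem Submodule.norm_sq_orthogonalProjectionOnto_eq_inner {E : Type*} [NormedAddCommGroup E]
    [InnerProductSpace ℝ E] (K : Submodule ℝ E) [K.HasOrthogonalProjection] (v : E) :
    ‖(K.orthogonalProjectionOnto v : E)‖ ^ 2 = inner ℝ (K.starProjection v) v := by
  rw [← RCLike.re_to_real (x := inner ℝ _ _), K.re_inner_starProjection_eq_normSq, K.coe_norm]

variable {n : ℕ}

lemma inner_rowInd_s9 (w : EuclideanSpace ℝ (Fin n × Fin n)) (i : Fin n) :
    inner ℝ w (rowInd n i) = ∑ j, w (i, j) := by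
  rw [PiLp.inner_apply, Fintype.sum_prod_type]
  simp [rowInd]

lemma inner_colInd_s9 (w : EuclideanSpace ℝ (Fin n × Fin n)) (j : Fin n) :
    inner ℝ w (colInd n j) = ∑ i, w (i, j) := by
  simp [colInd, PiLp.inner_apply, Fintype.sum_prod_type]

lemma inner_eq_zero_of_mem_spanSnn {u w : EuclideanSpace ℝ (Fin n × Fin n)}
    (hrow : ∀ i, ∑ j, u (i, j) = 0) (hcol : ∀ j, ∑ i, u (i, j) = 0) (hw : w ∈ spanSnn n) :
    inner ℝ u w = 0 := by
  refine Submodule.mem_orthogonal_singleton_iff_inner_right.1 (Submodule.span_le.2 ?_ hw)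
  rintro _ (⟨i, rfl⟩ | ⟨j, rfl⟩) <;>
    simp [Submodule.mem_orthogonal_singleton_iff_inner_right, inner_rowInd_s9, inner_colInd_s9, *]

lemma toLp_add_mem_spanSnn (f g : Fin n → ℝ) :
    WithLp.toLp 2 (fun p : Fin n × Fin n => f p.1 + g p.2) ∈ spanSnn n := by
  have hdecomp : WithLp.toLp 2 (fun p : Fin n × Fin n => f p.1 + g p.2)
      = ∑ i, f i • rowInd n i + ∑ j, g j • colInd n j := by
    ext p
    simp [rowInd, colInd]
  rw [hdecomp]
  refine add_mem (sum_mem fun i _ => ?_) (sum_mem fun j _ => ?_) <;>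
    refine Submodule.smul_mem _ _ (Submodule.subset_span ?_)
  exacts [Or.inl ⟨i, rfl⟩, Or.inr ⟨j, rfl⟩]

def additiveFit (q : EuclideanSpace ℝ (Fin n × Fin n)) : EuclideanSpace ℝ (Fin n × Fin n) :=
  WithLp.toLp 2 fun p =>
    (∑ j, q (p.1, j)) / n + (∑ i, q (i, p.2)) / n - (∑ i, ∑ j, q (i, j)) / n ^ 2

lemma additiveFit_mem_spanSnn (q : EuclideanSpace ℝ (Fin n × Fin n)) :
    additiveFit q ∈ spanSnn n := by
  convert toLp_add_mem_spanSnn (fun i => (∑ j, q (i, j)) / n - (∑ i, ∑ j, q (i, j)) / n ^ 2)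
    (fun j => (∑ i, q (i, j)) / n) using 1
  exact congrArg (WithLp.toLp 2) (funext fun _ => by ring)

lemma sum_additiveFit_row (q : EuclideanSpace ℝ (Fin n × Fin n)) (i : Fin n) :
    ∑ j, additiveFit q (i, j) = ∑ j, q (i, j) := by
  have hn : (n : ℝ) ≠ 0 := Nat.cast_ne_zero.2 (Fin.pos i).ne'
  simp only [additiveFit, PiLp.toLp_apply, sum_add_distrib, sum_sub_distrib, sum_const, card_univ,
    Fintype.card_fin, nsmul_eq_mul, ← sum_div, sum_comm (γ := Fin n) (f := fun j i => q (i, j))]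
  field_simp
  ring

lemma sum_additiveFit_col (q : EuclideanSpace ℝ (Fin n × Fin n)) (j : Fin n) :
    ∑ i, additiveFit q (i, j) = ∑ i, q (i, j) := by
  have hn : (n : ℝ) ≠ 0 := Nat.cast_ne_zero.2 (Fin.pos j).ne'
  simp only [additiveFit, PiLp.toLp_apply, sum_add_distrib, sum_sub_distrib, sum_const, card_univ,
    Fintype.card_fin, nsmul_eq_mul, ← sum_div]
  field_simp
  ring

lemma starProjection_spanSnn (q : EuclideanSpace ℝ (Fin n × Fin n)) :
    (spanSnn n).starProjection q = additiveFit q :=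
  Submodule.eq_starProjection_of_mem_of_inner_eq_zero (additiveFit_mem_spanSnn q) fun _ =>
    inner_eq_zero_of_mem_spanSnn (by simp [sum_sub_distrib, sum_additiveFit_row])
      (by simp [sum_sub_distrib, sum_additiveFit_col])

lemma inner_additiveFit_self (q : EuclideanSpace ℝ (Fin n × Fin n)) :
    inner ℝ (additiveFit q) q =
      (1 / n) * ((∑ i : Fin n, (∑ j : Fin n, q (i, j)) ^ 2)
        + (∑ j : Fin n, (∑ i : Fin n, q (i, j)) ^ 2)
        - (1 / n) * (∑ i : Fin n, ∑ j : Fin n, q (i, j)) ^ 2) := by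
  set r := fun i => ∑ j, q (i, j)
  set c := fun j => ∑ i, q (i, j)
  set s := ∑ i, ∑ j, q (i, j)
  have hrow : ∑ i, ∑ j, r i * q (i, j) = ∑ i, r i ^ 2 :=
    sum_congr rfl fun i _ => by rw [← mul_sum, sq]
  have hcol : ∑ i, ∑ j, c j * q (i, j) = ∑ j, c j ^ 2 := by
    rw [sum_comm]
    exact sum_congr rfl fun j _ => by rw [← mul_sum, sq]
  have htot : ∑ i, ∑ j, s / n * q (i, j) = 1 / n * s ^ 2 := by
    simp only [← mul_sum, s]; ring
  calc inner ℝ (additiveFit q) q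
      = 1 / n * ∑ i, ∑ j, (r i * q (i, j) + c j * q (i, j) - s / n * q (i, j)) := by
        simp only [additiveFit, PiLp.inner_apply, Fintype.sum_prod_type, RCLike.inner_apply,
          conj_trivial, mul_sum]
        exact sum_congr rfl fun i _ => sum_congr rfl fun j _ => by ring
    _ = 1 / n * (∑ i, r i ^ 2 + ∑ j, c j ^ 2 - 1 / n * s ^ 2) := by
        simp only [sum_add_distrib, sum_sub_distrib, hrow, hcol, htot]

theorem stmt9_general (n : ℕ) (q : EuclideanSpace ℝ (Fin n × Fin n)) :
    ‖((spanSnn n).orthogonalProjectionOnto q : EuclideanSpace ℝ (Fin n × Fin n))‖ ^ 2 =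
      (1 / n) * ((∑ i : Fin n, (∑ j : Fin n, q (i, j)) ^ 2)
        + (∑ j : Fin n, (∑ i : Fin n, q (i, j)) ^ 2)
        - (1 / n) * (∑ i : Fin n, ∑ j : Fin n, q (i, j)) ^ 2) := by
  rw [Submodule.norm_sq_orthogonalProjectionOnto_eq_inner, starProjection_spanSnn,
    inner_additiveFit_self]

theorem stmt9 (n : ℕ) (hn : 1 ≤ n) (q : EuclideanSpace ℝ (Fin n × Fin n)) :
    ‖((spanSnn n).orthogonalProjectionOnto q : EuclideanSpace ℝ (Fin n × Fin n))‖ ^ 2 =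
      (1 / n) * ((∑ i : Fin n, (∑ j : Fin n, q (i, j)) ^ 2)
        + (∑ j : Fin n, (∑ i : Fin n, q (i, j)) ^ 2)
        - (1 / n) * (∑ i : Fin n, ∑ j : Fin n, q (i, j)) ^ 2) :=
  stmt9_general n q

end
end
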